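/- (Exponentiated Gradient regret bound) Let η > 0 and let z_1,…,z_T ∈ ℝ^k satisfy η z_{t,i} ≥ -1 for all t ∈ [T], i ∈ [k]. Define q_1 = (1/k,…,1/k) and recursively q̃_{t+1,i} = q_{t,i} exp(-η z_{t,i}), q_{t+1} = q̃_{t+1} / ∑_{i=1}^k q̃_{t+1,i}. Then for every u ∈ Δ^k: ∑_{t=1}^T ⟨q_t - u, z_t⟩ ≤ log(k)/η + η ∑_{t=1}^T ∑_{i=1}^k q_{t,i} z_{t,i}². -/

import Mathlib

/-!
The relative entropy `KL(u ‖ q_t)` is a potential for the regret. One multiplicative update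
changes it by `η ⟨u, z_t⟩ + log Z_t`, where `Z_t = ∑ q_{t,i} exp (-η z_{t,i})`, and
`exp y ≤ 1 + y + y²` for `y ≤ 1` together with `log x ≤ x - 1` bounds
`log Z_t ≤ -η ⟨q_t, z_t⟩ + η² ∑ q_{t,i} z_{t,i}²`. Summing over `t` telescopes the potential,
which starts at `KL(u ‖ uniform) ≤ log k` and stays nonnegative by Gibbs' inequality.
-/

open Real Finset

lemma Real.exp_le_one_add_add_sq {y : ℝ} (hy : y ≤ 1) : exp y ≤ 1 + y + y ^ 2 := by
  rcases le_or_gt y (-1) with hy' | hy'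
  · have : exp y ≤ 1 := exp_le_one_iff.mpr (by linarith)
    nlinarith
  · have h := (abs_le.mp (abs_exp_sub_one_sub_id_le (abs_le.mpr ⟨hy'.le, hy⟩))).2
    linarith

lemma Real.sub_le_mul_log_sub_log {u q : ℝ} (hu : 0 ≤ u) (hq : 0 < q) :
    u - q ≤ u * (log u - log q) := by
  rcases hu.eq_or_lt with rfl | hu
  · simpa using hq.le
  have h := log_le_sub_one_of_pos (div_pos hq hu)
  rw [log_div hq.ne' hu.ne'] at h
  calc u - q = -(u * (q / u - 1)) := by field_simp; ring
    _ ≤ -(u * (log q - log u)) := by gcongr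
    _ = u * (log u - log q) := by ring

variable {ι : Type*} [Fintype ι]

noncomputable def relEntropy (u q : ι → ℝ) : ℝ :=
  ∑ i, u i * (log (u i) - log (q i))

noncomputable def egUpdate (η : ℝ) (z q : ι → ℝ) : ι → ℝ :=
  fun i => q i * exp (-η * z i) / ∑ j, q j * exp (-η * z j)

lemma relEntropy_nonneg {u q : ι → ℝ} (hu : ∀ i, 0 ≤ u i) (hq : ∀ i, 0 < q i)
    (hsum : ∑ i, u i = ∑ i, q i) : 0 ≤ relEntropy u q :=
  calc (0 : ℝ) = ∑ i, (u i - q i) := by rw [sum_sub_distrib, hsum, sub_self]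
    _ ≤ relEntropy u q := sum_le_sum fun i _ => sub_le_mul_log_sub_log (hu i) (hq i)

lemma relEntropy_const_le {u : ι → ℝ} (hu0 : ∀ i, 0 ≤ u i) (hu1 : ∑ i, u i = 1) (c : ℝ) :
    relEntropy u (fun _ => 1 / c) ≤ log c := by
  have hentropy : ∑ i, u i * log (u i) ≤ 0 :=
    sum_nonpos fun i _ => mul_log_nonpos (hu0 i)
      (hu1 ▸ single_le_sum (fun j _ => hu0 j) (mem_univ i))
  have hsplit : relEntropy u (fun _ => 1 / c) = ∑ i, u i * log (u i) + (∑ i, u i) * log c := by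
    simp only [relEntropy, one_div, log_inv, sum_mul, ← sum_add_distrib]
    exact sum_congr rfl fun i _ => by ring
  rw [hsplit, hu1]
  linarith

section egUpdate

variable [Nonempty ι] {η : ℝ} {z q : ι → ℝ}

lemma sum_mul_exp_pos (hq : ∀ i, 0 < q i) : 0 < ∑ j, q j * exp (-η * z j) :=
  sum_pos (fun j _ => mul_pos (hq j) (exp_pos _)) univ_nonempty

lemma egUpdate_pos (hq : ∀ i, 0 < q i) (i : ι) : 0 < egUpdate η z q i :=
  div_pos (mul_pos (hq i) (exp_pos _)) (sum_mul_exp_pos hq)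

lemma sum_egUpdate (hq : ∀ i, 0 < q i) : ∑ i, egUpdate η z q i = 1 := by
  unfold egUpdate
  rw [← sum_div, div_self (sum_mul_exp_pos hq).ne']

lemma relEntropy_egUpdate (hq : ∀ i, 0 < q i) {u : ι → ℝ} (hu1 : ∑ i, u i = 1) :
    relEntropy u (egUpdate η z q) =
      relEntropy u q + η * ∑ i, u i * z i + log (∑ j, q j * exp (-η * z j)) := by
  have hlog (i : ι) : log (egUpdate η z q i) =
      log (q i) - η * z i - log (∑ j, q j * exp (-η * z j)) := by
    rw [egUpdate, log_div (mul_pos (hq i) (exp_pos _)).ne' (sum_mul_exp_pos hq).ne',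
      log_mul (hq i).ne' (exp_ne_zero _), log_exp]
    ring
  set L := log (∑ j, q j * exp (-η * z j))
  calc relEntropy u (egUpdate η z q)
      = ∑ i, (u i * (log (u i) - log (q i)) + η * (u i * z i) + u i * L) := by
        simp only [relEntropy, hlog]
        exact sum_congr rfl fun i _ => by ring
    _ = relEntropy u q + η * ∑ i, u i * z i + L := by
        rw [sum_add_distrib, sum_add_distrib, ← mul_sum, ← sum_mul, hu1, one_mul, relEntropy]

lemma log_sum_mul_exp_le (hq : ∀ i, 0 < q i) (hq1 : ∑ i, q i = 1) (hz : ∀ i, η * z i ≥ -1) :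
    log (∑ j, q j * exp (-η * z j)) ≤
      -(η * ∑ i, q i * z i) + η ^ 2 * ∑ i, q i * z i ^ 2 := by
  have hZ : ∑ j, q j * exp (-η * z j) ≤ 1 - η * ∑ i, q i * z i + η ^ 2 * ∑ i, q i * z i ^ 2 :=
    calc ∑ j, q j * exp (-η * z j) ≤ ∑ j, q j * (1 + -η * z j + (-η * z j) ^ 2) :=
          sum_le_sum fun j _ => mul_le_mul_of_nonneg_left
            (exp_le_one_add_add_sq (by linarith [hz j])) (hq j).le
      _ = ∑ j, (q j - η * (q j * z j) + η ^ 2 * (q j * z j ^ 2)) :=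
          sum_congr rfl fun j _ => by ring
      _ = 1 - η * ∑ i, q i * z i + η ^ 2 * ∑ i, q i * z i ^ 2 := by
          rw [sum_add_distrib, sum_sub_distrib, ← mul_sum, ← mul_sum, hq1]
  linarith [log_le_sub_one_of_pos (sum_mul_exp_pos (η := η) (z := z) hq)]

lemma egUpdate_regret_step (hq : ∀ i, 0 < q i) (hq1 : ∑ i, q i = 1) (hz : ∀ i, η * z i ≥ -1)
    {u : ι → ℝ} (hu1 : ∑ i, u i = 1) :
    η * ∑ i, (q i - u i) * z i ≤
      relEntropy u q - relEntropy u (egUpdate η z q) + η ^ 2 * ∑ i, q i * z i ^ 2 := by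
  have hlin : ∑ i, (q i - u i) * z i = ∑ i, q i * z i - ∑ i, u i * z i := by
    rw [← sum_sub_distrib]
    exact sum_congr rfl fun i _ => by ring
  rw [relEntropy_egUpdate hq hu1, hlin]
  linarith [log_sum_mul_exp_le hq hq1 hz]

end egUpdate

theorem stmt_3 (k T : ℕ) (hk : 0 < k) (η : ℝ) (hη : 0 < η)
    (z : ℕ → Fin k → ℝ) (hz : ∀ t < T, ∀ i, η * z t i ≥ -1)
    (q : ℕ → Fin k → ℝ)
    (h0 : ∀ i, q 0 i = 1 / k)
    (hrec : ∀ t i, q (t + 1) i =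
      q t i * Real.exp (-η * z t i) / ∑ j, q t j * Real.exp (-η * z t j))
    (u : Fin k → ℝ) (hu0 : ∀ i, 0 ≤ u i) (hu1 : ∑ i, u i = 1) :
    ∑ t ∈ Finset.range T, ∑ i, (q t i - u i) * z t i ≤
      Real.log k / η + η * ∑ t ∈ Finset.range T, ∑ i, q t i * (z t i) ^ 2 := by
  have : Nonempty (Fin k) := Fin.pos_iff_nonempty.mp hk
  have hstep (t : ℕ) : q (t + 1) = egUpdate η (z t) (q t) := funext (hrec t)
  have hdist (t : ℕ) : (∀ i, 0 < q t i) ∧ ∑ i, q t i = 1 := by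
    induction t with
    | zero =>
      have hk' : (0 : ℝ) < k := Nat.cast_pos.mpr hk
      refine ⟨fun i => h0 i ▸ by positivity, ?_⟩
      simp [h0, hk'.ne']
    | succ t ih => exact hstep t ▸ ⟨egUpdate_pos ih.1, sum_egUpdate ih.1⟩
  set Φ : ℕ → ℝ := fun t => relEntropy u (q t)
  have hΦ0 : Φ 0 ≤ log k := by
    simpa only [Φ, show q 0 = fun _ => 1 / (k : ℝ) from funext h0] using
      relEntropy_const_le hu0 hu1 k
  have hΦT : 0 ≤ Φ T := relEntropy_nonneg hu0 (hdist T).1 (by rw [hu1, (hdist T).2])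
  have hregret : η * ∑ t ∈ range T, ∑ i, (q t i - u i) * z t i ≤
      Φ 0 - Φ T + η ^ 2 * ∑ t ∈ range T, ∑ i, q t i * z t i ^ 2 := by
    rw [mul_sum, mul_sum, ← sum_range_sub' Φ T, ← sum_add_distrib]
    refine sum_le_sum fun t ht => ?_
    simpa only [Φ, hstep t] using egUpdate_regret_step (hdist t).1 (hdist t).2
      (hz t (mem_range.mp ht)) hu1
  rw [div_add' _ _ _ hη.ne', le_div_iff₀ hη]
  linarith
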